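/- arXiv:1505.02655 — 2 statements merged into one kernel-verified Lean document; each statement's English description precedes it below -/
import Mathlib

section
/- Let G be a stochastic matrix indexed by Q with a single BSCC and smallest nonzero entry y_min, and let C = 10·|Q| / y_min^{|Q|}. Let g(0) satisfy 0 ≤ g(0) ≤ g_max·1 and let r satisfy ‖r‖ ≤ r_max. Define g(n+1) = r + G·g(n). Then for all n ≥ 0, |g(n)|_diff ≤ g_max + 2·C·r_max, where |v|_diff = max_{p,q} |v[p] - v[q]|. -/
/-!
Write `g n = Gⁿ g₀ + S n` with `S n = ∑_{i<n} Gⁱ r`; the first term stays in `[0, gmax]`.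
For the second, fix a state `s` reachable from everywhere and let `B` be `G` with column `s`
set to zero, i.e. the chain killed on entering `s`. Since `d n := S n - S n s` vanishes at `s`,
it obeys `d (n+1) = B d n + (r - (Gⁿ r) s)` with a forcing term bounded by `2 rmax`.
Every state reaches `s` within `k = |Q|` steps along edges of weight `≥ ymin`, so
`Bᵏ 1 ≤ 1 - ymin ^ k`; then `w := ymin ^ (-k) ∑_{j<k} Bʲ 1 ≤ k / ymin ^ k` satisfies
`1 + B w ≤ w`, and comparison with `w` gives `|d n| ≤ 2 rmax w`.
-/

open Finset Matrix

namespace Finset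

theorem eq_univ_of_chain {α : Type*} [Fintype α] {E : ℕ → Finset α} (h0 : (E 0).Nonempty)
    (hmono : ∀ m, E m ⊆ E (m + 1)) (hstable : ∀ m, E (m + 1) ⊆ E m → E m = univ) :
    E (Fintype.card α - 1) = univ := by
  have hgrow : ∀ m, E m = univ ∨ m + 1 ≤ #(E m) := by
    intro m
    induction m with
    | zero => exact Or.inr h0.card_pos
    | succ m ih =>
      by_cases hst : E (m + 1) ⊆ E m
      · exact Or.inl (eq_univ_of_forall fun x => hmono m (hstable m hst ▸ mem_univ x))
      · rcases ih with huniv | hcard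
        · exact absurd (huniv ▸ subset_univ _) hst
        · have := card_lt_card ⟨hmono m, hst⟩
          exact Or.inr (by omega)
  rcases hgrow (Fintype.card α - 1) with huniv | hcard
  · exact huniv
  · exact eq_univ_of_card _ (le_antisymm (card_le_univ _) (by omega))

end Finset

namespace Matrix

variable {Q : Type*}

theorem updateCol_zero_nonneg [DecidableEq Q] {M : Matrix Q Q ℝ} (hM : ∀ i j, 0 ≤ M i j)
    (s i j : Q) : 0 ≤ M.updateCol s 0 i j := by
  by_cases hj : j = s <;> simp [hj, hM i j]

variable [Fintype Q]

theorem mulVec_mono_of_nonneg {M : Matrix Q Q ℝ} (hM : ∀ i j, 0 ≤ M i j) {v w : Q → ℝ}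
    (h : v ≤ w) : M *ᵥ v ≤ M *ᵥ w := fun i =>
  Finset.sum_le_sum fun j _ => mul_le_mul_of_nonneg_left (h j) (hM i j)

theorem abs_mulVec_le_of_nonneg {M : Matrix Q Q ℝ} (hM : ∀ i j, 0 ≤ M i j) (v : Q → ℝ) :
    |M *ᵥ v| ≤ M *ᵥ |v| := fun i => by
  calc |(M *ᵥ v) i| ≤ ∑ j, |M i j * v j| := Finset.abs_sum_le_sum_abs _ _
    _ = (M *ᵥ |v|) i := by simp [mulVec, dotProduct, abs_mul, abs_of_nonneg (hM i _)]

theorem abs_le_mul_of_supersolution {M : Matrix Q Q ℝ} (hM : ∀ i j, 0 ≤ M i j) {w : Q → ℝ}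
    (hw0 : 0 ≤ w) (hw : 1 + M *ᵥ w ≤ w) {c : ℝ} (hc : 0 ≤ c) {d : ℕ → Q → ℝ} (h0 : d 0 = 0)
    (hstep : ∀ n x, |d (n + 1) x - (M *ᵥ d n) x| ≤ c) (n : ℕ) (x : Q) :
    |d n x| ≤ c * w x := by
  induction n generalizing x with
  | zero => simpa [h0] using mul_nonneg hc (hw0 x)
  | succ n ih =>
    calc |d (n + 1) x| = |(d (n + 1) x - (M *ᵥ d n) x) + (M *ᵥ d n) x| := by
          rw [sub_add_cancel]
      _ ≤ c + (M *ᵥ (c • w)) x :=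
          (abs_add_le _ _).trans <| add_le_add (hstep n x) <|
            (abs_mulVec_le_of_nonneg hM _ x).trans (mulVec_mono_of_nonneg hM (fun y => ih y) x)
      _ = c * (1 + M *ᵥ w) x := by simp [mulVec_smul]; ring
      _ ≤ c * w x := mul_le_mul_of_nonneg_left (hw x) hc

variable [DecidableEq Q]

theorem updateCol_zero_mulVec (M : Matrix Q Q ℝ) (s : Q) (v : Q → ℝ) :
    M.updateCol s 0 *ᵥ v = M *ᵥ Function.update v s 0 := by
  ext p
  refine Finset.sum_congr rfl fun x _ => ?_
  by_cases hx : x = s <;> simp [hx]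

theorem pow_mulVec_one_le_one {M : Matrix Q Q ℝ} (hM : ∀ i j, 0 ≤ M i j) (h1 : M *ᵥ 1 ≤ 1)
    (m : ℕ) : M ^ m *ᵥ 1 ≤ 1 := by
  induction m with
  | zero => simp
  | succ m ih =>
    calc M ^ (m + 1) *ᵥ 1 = M *ᵥ (M ^ m *ᵥ 1) := by rw [pow_succ', mulVec_mulVec]
      _ ≤ M *ᵥ 1 := mulVec_mono_of_nonneg hM ih
      _ ≤ 1 := h1

theorem pow_succ_mulVec_one_le {M : Matrix Q Q ℝ} (hM : ∀ i j, 0 ≤ M i j) (h1 : M *ᵥ 1 ≤ 1)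
    (m : ℕ) : M ^ (m + 1) *ᵥ 1 ≤ M ^ m *ᵥ 1 := by
  rw [pow_succ, ← mulVec_mulVec]
  exact mulVec_mono_of_nonneg (pow_apply_nonneg hM m) h1

theorem one_add_mulVec_sum_pow_mulVec_one_le {M : Matrix Q Q ℝ} {k : ℕ} {a : ℝ} (ha : 0 < a)
    (hk : ∀ x, (M ^ k *ᵥ 1) x ≤ 1 - a) :
    1 + M *ᵥ (a⁻¹ • ∑ j ∈ range k, M ^ j *ᵥ 1) ≤ a⁻¹ • ∑ j ∈ range k, M ^ j *ᵥ 1 := by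
  set S := ∑ j ∈ range k, M ^ j *ᵥ 1
  have hshift : M *ᵥ S + 1 = S + M ^ k *ᵥ 1 := by
    simpa [S, mulVec_sum, mulVec_mulVec, ← pow_succ'] using
      (sum_range_succ' (fun j => M ^ j *ᵥ 1) k).symm.trans (sum_range_succ _ k)
  intro x
  have hx : (M *ᵥ S) x + 1 = S x + (M ^ k *ᵥ 1) x := congrFun hshift x
  calc 1 + (M *ᵥ (a⁻¹ • S)) x = a⁻¹ * S x + a⁻¹ * ((M ^ k *ᵥ 1) x - (1 - a)) := by
        simp only [mulVec_smul, Pi.smul_apply, smul_eq_mul]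
        field_simp
        linarith
    _ ≤ a⁻¹ * S x := by
        linarith [mul_nonpos_of_nonneg_of_nonpos (inv_nonneg.2 ha.le) (sub_nonpos.2 (hk x))]
    _ = (a⁻¹ • S) x := rfl

theorem sum_range_succ_pow_mulVec (G : Matrix Q Q ℝ) (r : Q → ℝ) (n : ℕ) :
    ∑ i ∈ range (n + 1), G ^ i *ᵥ r = r + G *ᵥ ∑ i ∈ range n, G ^ i *ᵥ r := by
  simp [sum_range_succ', mulVec_sum, mulVec_mulVec, pow_succ', add_comm]

theorem eq_pow_mulVec_add_sum_of_forall_succ {G : Matrix Q Q ℝ} {r : Q → ℝ} {g : ℕ → Q → ℝ}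
    (hrec : ∀ n, g (n + 1) = fun q => r q + G.mulVec (g n) q) (n : ℕ) :
    g n = G ^ n *ᵥ g 0 + ∑ i ∈ range n, G ^ i *ᵥ r := by
  induction n with
  | zero => simp
  | succ n ih =>
    rw [sum_range_succ_pow_mulVec, pow_succ', ← mulVec_mulVec, hrec, ih, mulVec_add]
    ext q
    simp only [Pi.add_apply]
    ring

section Stochastic

variable {G : Matrix Q Q ℝ}

theorem mulVec_const_of_mem_rowStochastic (hG : G ∈ rowStochastic ℝ Q) (c : ℝ) :
    G *ᵥ (fun _ => c) = fun _ => c := by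
  have hconst : (fun _ : Q => c) = c • 1 := by ext; simp
  rw [hconst, mulVec_smul, hG.2]

theorem mulVec_apply_mem_Icc_of_mem_rowStochastic (hG : G ∈ rowStochastic ℝ Q)
    {v : Q → ℝ} {lo hi : ℝ} (hv : ∀ x, v x ∈ Set.Icc lo hi) (p : Q) :
    (G *ᵥ v) p ∈ Set.Icc lo hi := by
  have hmono := mulVec_mono_of_nonneg hG.1 (v := fun _ => lo) (w := v) (fun x => (hv x).1)
  have hmono' := mulVec_mono_of_nonneg hG.1 (v := v) (w := fun _ => hi) (fun x => (hv x).2)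
  rw [mulVec_const_of_mem_rowStochastic hG] at hmono hmono'
  exact ⟨hmono p, hmono' p⟩

theorem mulVec_apply_le_one_sub_of_mem_rowStochastic (hG : G ∈ rowStochastic ℝ Q)
    {v : Q → ℝ} (hv : v ≤ 1) (p x : Q) : (G *ᵥ v) p ≤ 1 - G p x * (1 - v x) := by
  have hgap : G p x * (1 - v x) ≤ (G *ᵥ (1 - v)) p :=
    Finset.single_le_sum (f := fun z => G p z * (1 - v z))
      (fun z _ => mul_nonneg (hG.1 p z) (sub_nonneg.2 (hv z))) (Finset.mem_univ x)
  rw [mulVec_sub, hG.2] at hgap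
  simp only [Pi.sub_apply, Pi.one_apply] at hgap
  linarith

theorem exists_pos_of_mem_rowStochastic (hG : G ∈ rowStochastic ℝ Q) (p : Q) :
    ∃ x, 0 < G p x := by
  obtain ⟨x, -, hx⟩ := Finset.exists_ne_zero_of_sum_ne_zero
    ((sum_row_of_mem_rowStochastic hG p).trans_ne one_ne_zero)
  exact ⟨x, (hG.1 p x).lt_of_ne' hx⟩

theorem updateCol_zero_mulVec_one_le (hG : G ∈ rowStochastic ℝ Q) (s : Q) :
    G.updateCol s 0 *ᵥ 1 ≤ 1 := by
  calc G.updateCol s 0 *ᵥ 1 = G *ᵥ Function.update 1 s 0 := updateCol_zero_mulVec G s 1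
    _ ≤ G *ᵥ 1 := mulVec_mono_of_nonneg hG.1 fun x => by by_cases hx : x = s <;> simp [hx]
    _ = 1 := hG.2

variable {s : Q} {ymin : ℝ}

-- `(G.updateCol s 0 ^ m *ᵥ 1) p` is the probability of avoiding `s` at steps `1, …, m` from `p`.

theorem updateCol_zero_pow_succ_mulVec_one_le (hG : G ∈ rowStochastic ℝ Q)
    (hymin : ∀ q q', G q q' ≠ 0 → ymin ≤ G q q') (hy : 0 ≤ ymin) {m : ℕ} {p x : Q}
    (hpx : 0 < G p x) (hx : x = s ∨ (G.updateCol s 0 ^ m *ᵥ 1) x ≤ 1 - ymin ^ m) :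
    (G.updateCol s 0 ^ (m + 1) *ᵥ 1) p ≤ 1 - ymin ^ (m + 1) := by
  set u := G.updateCol s 0 ^ m *ᵥ 1
  have hu : u ≤ 1 := pow_mulVec_one_le_one (updateCol_zero_nonneg hG.1 s)
    (updateCol_zero_mulVec_one_le hG s) m
  have hy1 : ymin ≤ 1 := (hymin p x hpx.ne').trans (le_one_of_mem_rowStochastic hG)
  have hv : Function.update u s 0 ≤ 1 := fun z => by
    by_cases hz : z = s
    · simp [hz]
    · simpa [hz] using hu z
  have hvx : Function.update u s 0 x ≤ 1 - ymin ^ m := by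
    by_cases hxs : x = s
    · simpa [hxs] using pow_le_one₀ hy hy1
    · simpa [hxs] using hx.resolve_left hxs
  calc (G.updateCol s 0 ^ (m + 1) *ᵥ 1) p = (G *ᵥ Function.update u s 0) p := by
        rw [pow_succ', ← mulVec_mulVec, updateCol_zero_mulVec]
    _ ≤ 1 - G p x * (1 - Function.update u s 0 x) :=
        mulVec_apply_le_one_sub_of_mem_rowStochastic hG hv p x
    _ ≤ 1 - ymin * ymin ^ m := by
        gcongr 1 - ?_
        exact mul_le_mul (hymin p x hpx.ne') (by linarith) (pow_nonneg hy m) hpx.le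
    _ = 1 - ymin ^ (m + 1) := by ring

theorem updateCol_zero_pow_card_mulVec_one_le (hG : G ∈ rowStochastic ℝ Q)
    (hymin : ∀ q q', G q q' ≠ 0 → ymin ≤ G q q') (hy : 0 ≤ ymin)
    (hreach : ∀ p, Relation.ReflTransGen (fun a b => 0 < G a b) p s) (p : Q) :
    (G.updateCol s 0 ^ Fintype.card Q *ᵥ 1) p ≤ 1 - ymin ^ Fintype.card Q := by
  set B := G.updateCol s 0
  have hy1 : ymin ≤ 1 := by
    obtain ⟨x, hx⟩ := exists_pos_of_mem_rowStochastic hG s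
    exact (hymin s x hx.ne').trans (le_one_of_mem_rowStochastic hG)
  -- `E m` grows with `m`; once it stops growing it is closed under predecessors, hence is `univ`.
  let E : ℕ → Finset Q := fun m => {x | x = s ∨ (B ^ m *ᵥ 1) x ≤ 1 - ymin ^ m}
  have hstep : ∀ m p x, 0 < G p x → x ∈ E m → (B ^ (m + 1) *ᵥ 1) p ≤ 1 - ymin ^ (m + 1) :=
    fun m p x hpx hx =>
      updateCol_zero_pow_succ_mulVec_one_le hG hymin hy hpx (by simpa [E] using hx)
  have hmono : ∀ m, E m ⊆ E (m + 1) := by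
    intro m x hx
    simp only [E, Finset.mem_filter, Finset.mem_univ, true_and] at hx ⊢
    refine hx.imp_right fun hx => ?_
    calc (B ^ (m + 1) *ᵥ 1) x ≤ (B ^ m *ᵥ 1) x :=
          pow_succ_mulVec_one_le (updateCol_zero_nonneg hG.1 s)
            (updateCol_zero_mulVec_one_le hG s) m x
      _ ≤ 1 - ymin ^ m := hx
      _ ≤ 1 - ymin ^ (m + 1) := by gcongr 1 - ?_; exact pow_le_pow_of_le_one hy hy1 m.le_succ
  have hstable : ∀ m, E (m + 1) ⊆ E m → E m = univ := by
    intro m hst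
    refine eq_univ_of_forall fun p => ?_
    induction hreach p using Relation.ReflTransGen.head_induction_on with
    | refl => simp [E]
    | head hpx _ ih => exact hst (by simpa [E] using Or.inr (hstep m _ _ hpx ih))
  have hcard : Fintype.card Q - 1 + 1 = Fintype.card Q :=
    Nat.sub_add_cancel (Fintype.card_pos_iff.2 ⟨s⟩)
  obtain ⟨x, hx⟩ := exists_pos_of_mem_rowStochastic hG p
  have hE := eq_univ_of_chain ⟨s, by simp [E]⟩ hmono hstable
  rw [← hcard]
  exact hstep _ p x hx (hE ▸ mem_univ x)

theorem apply_sub_updateCol_zero_mulVec_sub_const {G : Matrix Q Q ℝ}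
    (hG : G ∈ rowStochastic ℝ Q) (s : Q) (r v : Q → ℝ) (x : Q) :
    (r + G *ᵥ v) x - (r + G *ᵥ v) s - (G.updateCol s 0 *ᵥ (v - fun _ => v s)) x =
      r x - ((r + G *ᵥ v) s - v s) := by
  rw [updateCol_zero_mulVec, Function.update_eq_self_iff.2 (by simp), mulVec_sub,
    mulVec_const_of_mem_rowStochastic hG]
  simp only [Pi.add_apply, Pi.sub_apply]
  ring

theorem abs_sum_pow_mulVec_sub_le {G : Matrix Q Q ℝ} (hG : G ∈ rowStochastic ℝ Q) {s : Q}
    {a : ℝ} (ha : 0 < a) (hkill : ∀ x, (G.updateCol s 0 ^ Fintype.card Q *ᵥ 1) x ≤ 1 - a)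
    {r : Q → ℝ} {rmax : ℝ} (hr : ∀ x, |r x| ≤ rmax) (n : ℕ) (p : Q) :
    |(∑ i ∈ range n, G ^ i *ᵥ r) p - (∑ i ∈ range n, G ^ i *ᵥ r) s| ≤
      2 * rmax * (Fintype.card Q / a) := by
  set S : ℕ → Q → ℝ := fun n => ∑ i ∈ range n, G ^ i *ᵥ r
  set B := G.updateCol s 0
  set w := a⁻¹ • ∑ j ∈ range (Fintype.card Q), B ^ j *ᵥ 1
  have hB : ∀ i j, 0 ≤ B i j := updateCol_zero_nonneg hG.1 s
  have hB1 : ∀ j, B ^ j *ᵥ 1 ≤ 1 := pow_mulVec_one_le_one hB (updateCol_zero_mulVec_one_le hG s)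
  have hrmax : 0 ≤ rmax := (abs_nonneg _).trans (hr s)
  have hGr : ∀ i x, |(G ^ i *ᵥ r) x| ≤ rmax := fun i x => abs_le.2 <|
    mulVec_apply_mem_Icc_of_mem_rowStochastic (pow_mem hG i) (fun y => abs_le.1 (hr y)) x
  have hw0 : 0 ≤ w := fun x => by
    simpa [w] using mul_nonneg (inv_nonneg.2 ha.le) (sum_nonneg fun j _ => by
      simpa using mulVec_mono_of_nonneg (pow_apply_nonneg hB j) (zero_le_one (α := Q → ℝ)) x)
  have hwle : ∀ x, w x ≤ Fintype.card Q / a := fun x => by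
    simpa [w, div_eq_inv_mul] using mul_le_mul_of_nonneg_left
      (sum_le_card_nsmul (range (Fintype.card Q)) (fun j => (B ^ j *ᵥ 1) x) 1
        fun j _ => hB1 j x) (inv_nonneg.2 ha.le)
  have hd : ∀ n x,
      |(S (n + 1) x - S (n + 1) s) - (B *ᵥ (S n - fun _ => S n s)) x| ≤ 2 * rmax := by
    intro n x
    have hsucc : S (n + 1) = r + G *ᵥ S n := sum_range_succ_pow_mulVec G r n
    have hinc : S (n + 1) s - S n s = (G ^ n *ᵥ r) s := by simp [S, sum_range_succ]
    rw [hsucc, apply_sub_updateCol_zero_mulVec_sub_const hG, ← hsucc, hinc]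
    exact (abs_sub _ _).trans (by linarith [hr x, hGr n s])
  have := abs_le_mul_of_supersolution hB hw0 (one_add_mulVec_sum_pow_mulVec_one_le ha hkill)
    (by positivity) (d := fun n => S n - fun _ => S n s) (funext fun _ => by simp [S]) hd n p
  exact this.trans (mul_le_mul_of_nonneg_left (hwle p) (by positivity))

end Stochastic

end Matrix

theorem stmt4_general {Q : Type*} [Fintype Q] [DecidableEq Q]
    (G : Matrix Q Q ℝ) (ymin : ℝ) (r : Q → ℝ) (g : ℕ → Q → ℝ) (gmax rmax : ℝ)
    (hnonneg : ∀ q q', 0 ≤ G q q')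
    (hrow : ∀ q, ∑ q', G q q' = 1)
    (hy : 0 < ymin)
    (hymin : ∀ q q', G q q' ≠ 0 → ymin ≤ G q q')
    (hBSCC : ∃ s : Q, ∀ p : Q, Relation.ReflTransGen (fun a b => 0 < G a b) p s)
    (hg0 : ∀ q, 0 ≤ g 0 q ∧ g 0 q ≤ gmax)
    (hr : ∀ q, |r q| ≤ rmax)
    (hrec : ∀ n, g (n + 1) = fun q => r q + G.mulVec (g n) q) :
    ∀ n : ℕ, ∀ p q : Q,
      |g n p - g n q| ≤
        gmax + 2 * (10 * Fintype.card Q / ymin ^ Fintype.card Q) * rmax := by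
  intro n p q
  obtain ⟨s, hreach⟩ := hBSCC
  have hG : G ∈ rowStochastic ℝ Q := mem_rowStochastic_iff_sum.2 ⟨hnonneg, hrow⟩
  have hinit := mulVec_apply_mem_Icc_of_mem_rowStochastic (pow_mem hG n) hg0
  have hkill := updateCol_zero_pow_card_mulVec_one_le hG hymin hy.le hreach
  have hsum := abs_sum_pow_mulVec_sub_le hG (pow_pos hy _) hkill hr n
  have hC : 0 ≤ rmax * (Fintype.card Q / ymin ^ Fintype.card Q) :=
    mul_nonneg ((abs_nonneg _).trans (hr p)) (by positivity)
  rw [eq_pow_mulVec_add_sum_of_forall_succ hrec n, mul_div_assoc]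
  simp only [Pi.add_apply]
  obtain ⟨hp₁, hp₂⟩ := abs_le.1 (hsum p)
  obtain ⟨hq₁, hq₂⟩ := abs_le.1 (hsum q)
  obtain ⟨hip₁, hip₂⟩ := hinit p
  obtain ⟨hiq₁, hiq₂⟩ := hinit q
  rw [abs_le]
  constructor <;> linarith

/-- Let `G` be a stochastic matrix over a finite set `Q` with a single
BSCC (some state `s` is reachable from every state in the graph of `G`) and smallest
nonzero entry `ymin`, and let `C = 10·|Q| / ymin^|Q|`.  Let `0 ≤ g 0 ≤ gmax·1` and
`‖r‖_∞ ≤ rmax`, and `g (n+1) = r + G · g n`.  Then for all `n` and all states `p q`,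
`|g n p - g n q| ≤ gmax + 2·C·rmax`. -/
theorem stmt4 {Q : Type*} [Fintype Q] [Nonempty Q] [DecidableEq Q]
    (G : Matrix Q Q ℝ) (ymin : ℝ) (r : Q → ℝ) (g : ℕ → Q → ℝ) (gmax rmax : ℝ)
    (hnonneg : ∀ q q', 0 ≤ G q q')
    (hrow : ∀ q, ∑ q', G q q' = 1)
    (hy : 0 < ymin)
    (hymin : ∀ q q', G q q' ≠ 0 → ymin ≤ G q q')
    (hyatt : ∃ q q', G q q' = ymin)
    (hBSCC : ∃ s : Q, ∀ p : Q, Relation.ReflTransGen (fun a b => 0 < G a b) p s)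
    (hg0 : ∀ q, 0 ≤ g 0 q ∧ g 0 q ≤ gmax)
    (hr : ∀ q, |r q| ≤ rmax)
    (hrec : ∀ n, g (n + 1) = fun q => r q + G.mulVec (g n) q) :
    ∀ n : ℕ, ∀ p q : Q,
      |g n p - g n q| ≤
        gmax + 2 * (10 * Fintype.card Q / ymin ^ Fintype.card Q) * rmax :=
  stmt4_general G ymin r g gmax rmax hnonneg hrow hy hymin hBSCC hg0 hr hrec
end

section
/- Let R = post*(p(0)) be an infinite strongly connected set of configurations of a one-counter VASS (i.e., R ⊆ pre*(p(0))) with control state set Q. Then every configuration in pre*(R) can reach a configuration of R by a path of length at most 4|Q|³. -/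
/-- One step of a one-counter VASS with rules `δ`. -/
def OCStep {Q : Type*} (δ : Q → ℤ → Q → Prop) (c c' : Q × ℕ) : Prop :=
  ∃ κ : ℤ, δ c.1 κ c'.1 ∧ (c'.2 : ℤ) = (c.2 : ℤ) + κ

/-- Reachability in a one-counter VASS. -/
def OCReach {Q : Type*} (δ : Q → ℤ → Q → Prop) : Q × ℕ → Q × ℕ → Prop :=
  Relation.ReflTransGen (OCStep δ)

/-- Reachability by a path of at most `n` transitions. -/
def OCReachIn {Q : Type*} (δ : Q → ℤ → Q → Prop) (n : ℕ) (c c' : Q × ℕ) : Prop :=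
  ∃ m ≤ n, ∃ w : ℕ → Q × ℕ, w 0 = c ∧ w m = c' ∧ ∀ i < m, OCStep δ (w i) (w (i + 1))

/-! Write `R` for the set of configurations reachable from `p(0)`.  Pigeonhole on the first
`|Q| + 1` levels of a path to a high configuration of `R`, together with `R ⊆ pre*(p(0))`, gives a
period `0 < h ≤ |Q|` with `p(h) ∈ R`, so `R` is closed under adding multiples of `h`.  Pigeonhole on
the last visits of the top `|Q|·h + 1` levels of a path into `R` shows moreover that every class
`(state, counter mod h)` of `R` is closed downwards as long as the counter stays `≥ |Q|·h`.

Now take a path from `c` into `R` of length `≥ 3|Q|³`.  If some class recurs with a counter that did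
not increase, cut out the loop and lift the rest of the path by a multiple of `h`.  Otherwise the
counter never drops by `|Q|·h` or more.  If it climbs by `|Q|·h` to a height `≥ 3|Q|·h`, the first
visits of the top `|Q|·h + 1` levels contain a climbing loop between two equal classes; cutting it
lowers the rest of the path by a multiple of `h` and keeps its end in `R`.  If it does not climb like
that, the path is injective inside a window of `3|Q|·h` counter values, so it has at most
`3|Q|²h ≤ 3|Q|³` configurations.  Hence a shortest path from `c` into `R` has fewer than `3|Q|³`
steps. -/

section Paths

variable {Q : Type*} {δ : Q → ℤ → Q → Prop}

def HasUnitSteps (δ : Q → ℤ → Q → Prop) : Prop :=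
  ∀ a k b, δ a k b → k = -1 ∨ k = 0 ∨ k = 1

theorem OCStep.counter_le (hκ : HasUnitSteps δ) {c c' : Q × ℕ} (h : OCStep δ c c') :
    c'.2 ≤ c.2 + 1 ∧ c.2 ≤ c'.2 + 1 := by
  obtain ⟨κ, hδ, hc⟩ := h
  rcases hκ _ _ _ hδ with rfl | rfl | rfl <;> omega

theorem OCStep.shift {c c' : Q × ℕ} (h : OCStep δ c c') {a b : ℕ} (hc : b ≤ c.2 + a)
    (hc' : b ≤ c'.2 + a) : OCStep δ (c.1, c.2 + a - b) (c'.1, c'.2 + a - b) := by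
  obtain ⟨κ, hδ, hcc'⟩ := h
  exact ⟨κ, hδ, by omega⟩

theorem OCReach.trans {c d e : Q × ℕ} (hcd : OCReach δ c d) (hde : OCReach δ d e) :
    OCReach δ c e :=
  Relation.ReflTransGen.trans hcd hde

theorem OCReach.shift_up {c d : Q × ℕ} (h : OCReach δ c d) (a : ℕ) :
    OCReach δ (c.1, c.2 + a) (d.1, d.2 + a) := by
  induction h with
  | refl => exact Relation.ReflTransGen.refl
  | tail _ hstep ih =>
    exact Relation.ReflTransGen.tail ih
      (by simpa using hstep.shift (a := a) (b := 0) le_add_self le_add_self)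

def IsOCPath (δ : Q → ℤ → Q → Prop) (w : ℕ → Q × ℕ) (m : ℕ) : Prop :=
  ∀ i < m, OCStep δ (w i) (w (i + 1))

/-- `OCReachIn δ n c d` unfolds to `∃ m ≤ n, OCPath δ m c d`. -/
def OCPath (δ : Q → ℤ → Q → Prop) (m : ℕ) (c d : Q × ℕ) : Prop :=
  ∃ w : ℕ → Q × ℕ, w 0 = c ∧ w m = d ∧ IsOCPath δ w m

theorem IsOCPath.reach {w : ℕ → Q × ℕ} {m : ℕ} (hw : IsOCPath δ w m) {i j : ℕ} (hij : i ≤ j)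
    (hjm : j ≤ m) : OCReach δ (w i) (w j) := by
  induction j, hij using Nat.le_induction with
  | base => exact Relation.ReflTransGen.refl
  | succ j _ ih => exact (ih (by omega)).tail (hw j (by omega))

theorem OCPath.reach {m : ℕ} {c d : Q × ℕ} (h : OCPath δ m c d) : OCReach δ c d := by
  obtain ⟨w, rfl, rfl, hw⟩ := h
  exact hw.reach (Nat.zero_le m) le_rfl

theorem OCReach.exists_ocPath {c d : Q × ℕ} (h : OCReach δ c d) : ∃ m, OCPath δ m c d := by
  induction h with
  | refl => exact ⟨0, fun _ => c, rfl, rfl, fun i hi => absurd hi (Nat.not_lt_zero i)⟩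
  | @tail b e _ hstep ih =>
    obtain ⟨m, w, hw0, rfl, hw⟩ := ih
    refine ⟨m + 1, fun i => if i ≤ m then w i else e, by simp [hw0], by simp, fun i hi => ?_⟩
    rcases Nat.lt_or_ge i m with hi | hi
    · simpa [hi.le, Nat.succ_le_of_lt hi] using hw i hi
    · obtain rfl : i = m := by omega
      simpa using hstep

/-- The shift `(w i).2 - (w j).2` of the tail may be negative; `hlow` keeps the shifted counters
in `ℕ`, so the truncated subtraction in the endpoint is exact. -/
theorem IsOCPath.exists_cut {w : ℕ → Q × ℕ} {m i j : ℕ} (hw : IsOCPath δ w m) (hij : i ≤ j)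
    (hjm : j ≤ m) (hstate : (w i).1 = (w j).1)
    (hlow : ∀ k, j ≤ k → k ≤ m → (w j).2 ≤ (w k).2 + (w i).2) :
    OCPath δ (i + (m - j)) (w 0) ((w m).1, (w m).2 + (w i).2 - (w j).2) := by
  set u : ℕ → Q × ℕ := fun k => ((w k).1, (w k).2 + (w i).2 - (w j).2)
  have hu : ∀ k, i ≤ k → (if k ≤ i then w k else u (k - i + j)) = u (k - i + j) := by
    intro k hk
    split_ifs with hki
    · obtain rfl : k = i := by omega
      exact Prod.ext (by simpa [u] using hstate) (by simp [u])
    · rfl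
  refine ⟨fun k => if k ≤ i then w k else u (k - i + j), by simp, ?_, fun k hk => ?_⟩
  · beta_reduce
    rw [hu _ (by omega), show i + (m - j) - i + j = m by omega]
  · rcases Nat.lt_or_ge k i with hki | hki
    · simpa [hki.le, Nat.succ_le_of_lt hki] using hw k (by omega)
    · beta_reduce
      rw [hu k hki, hu (k + 1) (by omega), show k + 1 - i + j = k - i + j + 1 by omega]
      exact (hw _ (by omega)).shift (hlow _ (by omega) (by omega)) (hlow _ (by omega) (by omega))

theorem IsOCPath.counter_step (hκ : HasUnitSteps δ) {w : ℕ → Q × ℕ} {m : ℕ}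
    (hw : IsOCPath δ w m) {k : ℕ} (hk : k < m) :
    ((w (k + 1)).2 : ℤ) ≤ (w k).2 + 1 ∧ ((w k).2 : ℤ) ≤ (w (k + 1)).2 + 1 := by
  have := (hw k hk).counter_le hκ
  omega

end Paths

section Levels

variable {v : ℕ → ℤ} {a b : ℕ} {y : ℤ}

theorem exists_first_ge (hv : ∀ k, a ≤ k → k < b → v (k + 1) ≤ v k + 1) (hab : a ≤ b)
    (ha : v a ≤ y) (hb : y ≤ v b) :
    ∃ t, a ≤ t ∧ t ≤ b ∧ v t = y ∧ ∀ k, a ≤ k → k < t → v k < y := by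
  classical
  have hex : ∃ t, a ≤ t ∧ y ≤ v t := ⟨b, hab, hb⟩
  set t := Nat.find hex with ht
  have hmin : ∀ k, a ≤ k → k < t → v k < y := fun k hak hk =>
    lt_of_not_ge fun hyk => Nat.find_min hex hk ⟨hak, hyk⟩
  obtain ⟨hat, hyt⟩ : a ≤ t ∧ y ≤ v t := Nat.find_spec hex
  have htb : t ≤ b := Nat.find_min' hex ⟨hab, hb⟩
  refine ⟨t, hat, htb, le_antisymm ?_ hyt, hmin⟩
  rcases hat.eq_or_lt with heq | hlt
  · rwa [← heq]
  · have hstep := hv (t - 1) (by omega) (by omega)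
    have hprev := hmin (t - 1) (by omega) (by omega)
    rw [Nat.sub_add_cancel (by omega)] at hstep
    omega

theorem exists_first_le (hv : ∀ k, a ≤ k → k < b → v k ≤ v (k + 1) + 1) (hab : a ≤ b)
    (ha : y ≤ v a) (hb : v b ≤ y) :
    ∃ t, a ≤ t ∧ t ≤ b ∧ v t = y ∧ ∀ k, a ≤ k → k < t → y < v k := by
  obtain ⟨t, hat, htb, hvt, hlt⟩ := exists_first_ge (v := fun k => -v k) (y := -y)
    (fun k hak hkb => by linarith [hv k hak hkb]) hab (by simpa using ha) (by simpa using hb)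
  exact ⟨t, hat, htb, by simpa using hvt, fun k hak hkt => by simpa using hlt k hak hkt⟩

theorem exists_last_ge (hv : ∀ k, a ≤ k → k < b → v (k + 1) ≤ v k + 1) (hab : a ≤ b)
    (ha : v a ≤ y) (hb : y ≤ v b) :
    ∃ t, a ≤ t ∧ t ≤ b ∧ v t = y ∧ ∀ k, t < k → k ≤ b → y < v k := by
  obtain ⟨s, has, hsb, hvs, hlt⟩ := exists_first_le (v := fun k => v (a + b - k)) (y := y)
    (fun k hak hkb => by
      have := hv (a + b - (k + 1)) (by omega) (by omega)
      rwa [show a + b - (k + 1) + 1 = a + b - k by omega] at this)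
    hab (by simpa using hb) (by simpa using ha)
  refine ⟨a + b - s, by omega, by omega, hvs, fun k htk hkb => ?_⟩
  have := hlt (a + b - k) (by omega) (by omega)
  rwa [show a + b - (a + b - k) = k by omega] at this

end Levels

theorem exists_lt_levels_map_eq {β : Type*} [Fintype β] {P : ℕ → ℕ → Prop} {lo N : ℕ}
    (hN : Fintype.card β ≤ N) (hP : ∀ y, lo ≤ y → y ≤ lo + N → ∃ t, P y t) (key : ℕ → β) :
    ∃ y y' t t', lo ≤ y ∧ y < y' ∧ y' ≤ lo + N ∧ P y t ∧ P y' t' ∧ key t = key t' := by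
  choose T hT using fun y : Fin (N + 1) => hP (lo + y) (by omega) (by omega)
  obtain ⟨y, y', hne, heq⟩ := Fintype.exists_ne_map_eq_of_card_lt (key ∘ T)
    (by rw [Fintype.card_fin]; omega)
  rcases lt_or_gt_of_ne (Fin.val_injective.ne hne) with hlt | hlt
  · exact ⟨lo + y, lo + y', _, _, by omega, by omega, by omega, hT y, hT y', heq⟩
  · exact ⟨lo + y', lo + y, _, _, by omega, by omega, by omega, hT y', hT y, heq.symm⟩

theorem succ_le_card_mul_of_injOn {Q : Type*} [Fintype Q] {w : ℕ → Q × ℕ} {m lo N : ℕ}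
    (hinj : Set.InjOn w (Finset.range (m + 1))) (hw : ∀ k ≤ m, lo ≤ (w k).2 ∧ (w k).2 < lo + N) :
    m + 1 ≤ Fintype.card Q * N := by
  simpa using Finset.card_le_card_of_injOn (t := Finset.univ ×ˢ Finset.Ico lo (lo + N)) w
    (fun k hk => by simpa using hw k (by simpa [Nat.lt_succ_iff] using hk)) hinj

theorem Nat.ModEq.add_tsub_modEq {h n y y' : ℕ} (hyy' : y ≡ y' [MOD h]) (hle : y' ≤ n + y) :
    n + y - y' ≡ n [MOD h] := by
  apply Nat.ModEq.add_right_cancel' y'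
  rw [Nat.sub_add_cancel hle]
  exact hyy'.add_left n

section Classes

variable {Q : Type*}

def stateResidue (h : ℕ) (c : Q × ℕ) : Q × ZMod h := (c.1, c.2)

theorem stateResidue_eq_iff {h : ℕ} {c c' : Q × ℕ} :
    stateResidue h c = stateResidue h c' ↔ c.1 = c'.1 ∧ c.2 ≡ c'.2 [MOD h] := by
  simp [stateResidue, Prod.ext_iff, ZMod.natCast_eq_natCast_iff]

def NoDescendingRevisit (h : ℕ) (w : ℕ → Q × ℕ) (m : ℕ) : Prop :=
  ∀ i j, i < j → j ≤ m → stateResidue h (w i) = stateResidue h (w j) → (w i).2 < (w j).2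

theorem NoDescendingRevisit.injOn {h : ℕ} {w : ℕ → Q × ℕ} {m : ℕ}
    (hrev : NoDescendingRevisit h w m) : Set.InjOn w (Finset.range (m + 1)) := by
  intro i hi j hj heq
  simp only [Finset.coe_range, Set.mem_Iio] at hi hj
  by_contra hne
  rcases Nat.lt_or_gt_of_ne hne with hlt | hlt
  · exact (hrev i j hlt (by omega) (congrArg _ heq)).ne (congrArg Prod.snd heq)
  · exact (hrev j i hlt (by omega) (congrArg _ heq.symm)).ne (congrArg Prod.snd heq.symm)

end Classes

section Reachable

variable {Q : Type*} {δ : Q → ℤ → Q → Prop} {p : Q}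

theorem exists_period [Fintype Q] (hκ : HasUnitSteps δ)
    (hinf : {c : Q × ℕ | OCReach δ (p, 0) c}.Infinite)
    (hback : ∀ c, OCReach δ (p, 0) c → OCReach δ c (p, 0)) :
    ∃ h, 0 < h ∧ h ≤ Fintype.card Q ∧ OCReach δ (p, 0) (p, h) := by
  obtain ⟨c, hc, hcQ⟩ : ∃ c, OCReach δ (p, 0) c ∧ Fintype.card Q ≤ c.2 := by
    by_contra! hlow
    exact hinf ((Set.finite_univ.prod (Set.finite_Iio _)).subset fun c hc => ⟨trivial, hlow c hc⟩)
  obtain ⟨m, w, hw0, rfl, hw⟩ := hc.exists_ocPath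
  have hR : ∀ t ≤ m, OCReach δ (p, 0) (w t) := fun t ht => hw0 ▸ hw.reach (Nat.zero_le t) ht
  obtain ⟨y, y', t, t', -, hyy', hy', ⟨htm, hty⟩, ⟨ht'm, ht'y⟩, hstate⟩ :=
    exists_lt_levels_map_eq (lo := 0) le_rfl (P := fun y t => t ≤ m ∧ (w t).2 = y)
      (fun y _ hy => by
        obtain ⟨t, -, htm, hty, -⟩ := exists_first_ge (v := fun k => ((w k).2 : ℤ)) (y := y)
          (fun k _ hk => (hw.counter_step hκ hk).1) (Nat.zero_le m) (by simp [hw0])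
          (by simp only [Nat.cast_le]; omega)
        exact ⟨t, htm, by exact_mod_cast hty⟩)
      (fun t => (w t).1)
  refine ⟨y' - y, by omega, by omega, (hR t' ht'm).trans ?_⟩
  have hwt' : w t' = ((w t).1, (w t).2 + (y' - y)) := Prod.ext hstate.symm (by omega)
  simpa [hwt'] using (hback _ (hR t htm)).shift_up (y' - y)

theorem reach_add_of_dvd {h : ℕ} (hph : OCReach δ (p, 0) (p, h)) {q : Q} {n d : ℕ}
    (hq : OCReach δ (p, 0) (q, n)) (hd : h ∣ d) : OCReach δ (p, 0) (q, n + d) := by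
  obtain ⟨k, rfl⟩ := hd
  induction k with
  | zero => simpa using hq
  | succ k ih =>
    have hshift : OCReach δ (p, h) (q, n + h * k + h) := by simpa using ih.shift_up h
    simpa [Nat.mul_succ, add_assoc] using hph.trans hshift

theorem exists_lt_modEq_of_reach [Fintype Q] (hκ : HasUnitSteps δ) {h : ℕ} (hh : 0 < h) {q : Q}
    {n : ℕ} (hq : OCReach δ (p, 0) (q, n)) (hn : Fintype.card Q * h ≤ n) :
    ∃ x < n, x ≡ n [MOD h] ∧ OCReach δ (p, 0) (q, x) := by
  have : NeZero h := ⟨hh.ne'⟩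
  obtain ⟨m, w, hw0, hwm, hw⟩ := hq.exists_ocPath
  obtain ⟨y, y', t, t', hy, hyy', hy', ⟨htm, hty, -⟩, ⟨ht'm, ht'y, hafter⟩, hkey⟩ :=
    exists_lt_levels_map_eq (lo := n - Fintype.card Q * h) (N := Fintype.card Q * h)
      (by simp [ZMod.card])
      (P := fun y t => t ≤ m ∧ (w t).2 = y ∧ ∀ k, t < k → k ≤ m → y < (w k).2)
      (fun y _ hy => by
        obtain ⟨t, -, htm, hty, hafter⟩ := exists_last_ge (v := fun k => ((w k).2 : ℤ)) (y := y)
          (fun k _ hk => (hw.counter_step hκ hk).1) (Nat.zero_le m) (by simp [hw0])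
          (by simp only [hwm, Nat.cast_le]; omega)
        exact ⟨t, htm, by exact_mod_cast hty, fun k h1 h2 => by exact_mod_cast hafter k h1 h2⟩)
      (fun t => stateResidue h (w t))
  obtain ⟨hstate, hmod⟩ := stateResidue_eq_iff.1 hkey
  have htt' : t < t' := by
    by_contra! h'
    rcases h'.lt_or_eq with h' | rfl
    · have := hafter t h' htm
      omega
    · omega
  have hcut := hw.exists_cut htt'.le ht'm hstate fun k hk hkm => by
    rcases hk.lt_or_eq with hk | rfl
    · have := hafter k hk hkm
      omega
    · omega
  simp only [hwm, hw0, hty, ht'y] at hcut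
  rw [hty, ht'y] at hmod
  exact ⟨n + y - y', by omega, hmod.add_tsub_modEq (by omega), hcut.reach⟩

theorem reach_of_modEq [Fintype Q] (hκ : HasUnitSteps δ) {h : ℕ} (hh : 0 < h)
    (hph : OCReach δ (p, 0) (p, h)) {q : Q} {n n' : ℕ} (hq : OCReach δ (p, 0) (q, n))
    (hn' : Fintype.card Q * h ≤ n') (hmod : n' ≡ n [MOD h]) : OCReach δ (p, 0) (q, n') := by
  classical
  have hex : ∃ x, x ≡ n [MOD h] ∧ OCReach δ (p, 0) (q, x) := ⟨n, rfl, hq⟩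
  set n₀ := Nat.find hex
  obtain ⟨hmod₀, hR₀⟩ : n₀ ≡ n [MOD h] ∧ OCReach δ (p, 0) (q, n₀) := Nat.find_spec hex
  have hle : n₀ ≤ n' := by
    by_contra! hlt
    obtain ⟨x, hx, hxmod, hxR⟩ := exists_lt_modEq_of_reach hκ hh hR₀ (by omega)
    exact Nat.find_min hex hx ⟨hxmod.trans hmod₀, hxR⟩
  have hdvd : h ∣ n' - n₀ := (Nat.modEq_iff_dvd' hle).1 (hmod₀.trans hmod.symm)
  simpa [Nat.add_sub_cancel' hle] using reach_add_of_dvd hph hR₀ hdvd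

theorem exists_shorter_of_revisit {h : ℕ} (hph : OCReach δ (p, 0) (p, h)) {w : ℕ → Q × ℕ}
    {m i j : ℕ} (hw : IsOCPath δ w m) (hij : i < j) (hjm : j ≤ m)
    (hkey : stateResidue h (w i) = stateResidue h (w j)) (hle : (w j).2 ≤ (w i).2)
    (hR : OCReach δ (p, 0) (w m)) :
    ∃ m' < m, ∃ d, OCReach δ (p, 0) d ∧ OCPath δ m' (w 0) d := by
  obtain ⟨hstate, hmod⟩ := stateResidue_eq_iff.1 hkey
  refine ⟨i + (m - j), by omega, _, ?_, hw.exists_cut hij.le hjm hstate fun k _ _ => by omega⟩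
  rw [Nat.add_sub_assoc hle]
  exact reach_add_of_dvd (q := (w m).1) hph hR ((Nat.modEq_iff_dvd' hle).1 hmod.symm)

theorem NoDescendingRevisit.counter_lt_add [Fintype Q] (hκ : HasUnitSteps δ) {h : ℕ} (hh : 0 < h)
    {w : ℕ → Q × ℕ} {m : ℕ} (hw : IsOCPath δ w m) (hrev : NoDescendingRevisit h w m) {a b : ℕ}
    (hab : a ≤ b) (hbm : b ≤ m) : (w a).2 < (w b).2 + Fintype.card Q * h := by
  have : NeZero h := ⟨hh.ne'⟩
  by_contra! hdrop
  obtain ⟨y, y', t, t', -, hyy', hy', ⟨hat, htb, hty, -⟩, ⟨-, -, ht'y, hbefore⟩, hkey⟩ :=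
    exists_lt_levels_map_eq (lo := (w b).2) (N := Fintype.card Q * h) (by simp [ZMod.card])
      (P := fun y t => a ≤ t ∧ t ≤ b ∧ (w t).2 = y ∧ ∀ k, a ≤ k → k < t → y < (w k).2)
      (fun y hy hy' => by
        obtain ⟨t, hat, htb, hty, hbefore⟩ := exists_first_le (v := fun k => ((w k).2 : ℤ))
          (y := y) (fun k _ hk => (hw.counter_step hκ (by omega)).2) hab
          (by simp only [Nat.cast_le]; omega) (by simp only [Nat.cast_le]; omega)
        exact ⟨t, hat, htb, by exact_mod_cast hty,
          fun k h1 h2 => by exact_mod_cast hbefore k h1 h2⟩)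
      (fun t => stateResidue h (w t))
  have ht't : t' < t := by
    by_contra! h'
    rcases h'.lt_or_eq with h' | rfl
    · have := hbefore t hat h'
      omega
    · omega
  have := hrev t' t ht't (by omega) hkey.symm
  omega

theorem exists_shorter_of_climb [Fintype Q] (hκ : HasUnitSteps δ) {h : ℕ} (hh : 0 < h)
    (hph : OCReach δ (p, 0) (p, h)) {w : ℕ → Q × ℕ} {m : ℕ} (hw : IsOCPath δ w m)
    (hdrop : ∀ a b, a ≤ b → b ≤ m → (w a).2 < (w b).2 + Fintype.card Q * h) {s : ℕ}
    (hsm : s ≤ m) (hs0 : (w 0).2 + Fintype.card Q * h ≤ (w s).2)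
    (hs : 3 * (Fintype.card Q * h) ≤ (w s).2) (hR : OCReach δ (p, 0) (w m)) :
    ∃ m' < m, ∃ d, OCReach δ (p, 0) d ∧ OCPath δ m' (w 0) d := by
  have : NeZero h := ⟨hh.ne'⟩
  obtain ⟨y, y', t, t', hy, hyy', hy', ⟨-, hty, hbefore⟩, ⟨ht's, ht'y, -⟩, hkey⟩ :=
    exists_lt_levels_map_eq (lo := (w s).2 - Fintype.card Q * h) (N := Fintype.card Q * h)
      (by simp [ZMod.card])
      (P := fun y t => t ≤ s ∧ (w t).2 = y ∧ ∀ k < t, (w k).2 < y)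
      (fun y hy hy' => by
        obtain ⟨t, -, hts, hty, hbefore⟩ := exists_first_ge (v := fun k => ((w k).2 : ℤ))
          (y := y) (fun k _ hk => (hw.counter_step hκ (by omega)).1) (Nat.zero_le s)
          (by simp only [Nat.cast_le]; omega) (by simp only [Nat.cast_le]; omega)
        exact ⟨t, hts, by exact_mod_cast hty,
          fun k hk => by exact_mod_cast hbefore k (Nat.zero_le k) hk⟩)
      (fun t => stateResidue h (w t))
  obtain ⟨hstate, hmod⟩ := stateResidue_eq_iff.1 hkey
  rw [hty, ht'y] at hmod
  have htt' : t < t' := by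
    by_contra! h'
    rcases h'.lt_or_eq with h' | rfl
    · have := hbefore t' h'
      omega
    · omega
  have hcut := hw.exists_cut htt'.le (by omega) hstate fun k hk hkm => by
    have := hdrop t' k hk hkm
    omega
  simp only [hty, ht'y] at hcut
  refine ⟨t + (m - t'), by omega, _, ?_, hcut⟩
  have hend := hdrop s m hsm le_rfl
  exact reach_of_modEq hκ hh hph (q := (w m).1) hR (by omega) (hmod.add_tsub_modEq (by omega))

theorem exists_shorter [Fintype Q] (hκ : HasUnitSteps δ) {h : ℕ} (hh : 0 < h)
    (hhQ : h ≤ Fintype.card Q) (hph : OCReach δ (p, 0) (p, h)) {w : ℕ → Q × ℕ} {m : ℕ}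
    (hw : IsOCPath δ w m) (hR : OCReach δ (p, 0) (w m)) (hm : 3 * Fintype.card Q ^ 3 ≤ m) :
    ∃ m' < m, ∃ d, OCReach δ (p, 0) d ∧ OCPath δ m' (w 0) d := by
  by_cases hrev : NoDescendingRevisit h w m
  swap
  · obtain ⟨i, j, hij, hjm, hkey, hle⟩ : ∃ i j, i < j ∧ j ≤ m ∧
        stateResidue h (w i) = stateResidue h (w j) ∧ (w j).2 ≤ (w i).2 := by
      simpa [NoDescendingRevisit] using hrev
    exact exists_shorter_of_revisit hph hw hij hjm hkey hle hR
  have hdrop := fun a b hab hbm => hrev.counter_lt_add hκ hh hw (a := a) (b := b) hab hbm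
  by_cases hclimb : ∃ s ≤ m, (w 0).2 + Fintype.card Q * h ≤ (w s).2 ∧
      3 * (Fintype.card Q * h) ≤ (w s).2
  · obtain ⟨s, hsm, hs0, hs⟩ := hclimb
    exact exists_shorter_of_climb hκ hh hph hw hdrop hsm hs0 hs hR
  push Not at hclimb
  have hcard := succ_le_card_mul_of_injOn (lo := (w 0).2 - Fintype.card Q * h)
    (N := 3 * (Fintype.card Q * h)) hrev.injOn fun k hk => by
      have := hdrop 0 k (Nat.zero_le k) hk
      have := hclimb k hk
      omega
  have : Fintype.card Q * (3 * (Fintype.card Q * h)) ≤ 3 * Fintype.card Q ^ 3 := by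
    calc Fintype.card Q * (3 * (Fintype.card Q * h))
        ≤ Fintype.card Q * (3 * (Fintype.card Q * Fintype.card Q)) := by gcongr
      _ = 3 * Fintype.card Q ^ 3 := by ring
  omega

theorem exists_reachIn_of_ocPath [Fintype Q] (hκ : HasUnitSteps δ) {h : ℕ} (hh : 0 < h)
    (hhQ : h ≤ Fintype.card Q) (hph : OCReach δ (p, 0) (p, h)) {m : ℕ} {c d : Q × ℕ}
    (hcd : OCPath δ m c d) (hd : OCReach δ (p, 0) d) :
    ∃ d', OCReach δ (p, 0) d' ∧ OCReachIn δ (3 * Fintype.card Q ^ 3) c d' := by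
  induction m using Nat.strong_induction_on generalizing c d with
  | _ m ih =>
    obtain ⟨w, rfl, rfl, hw⟩ := hcd
    by_cases hm : m ≤ 3 * Fintype.card Q ^ 3
    · exact ⟨w m, hd, m, hm, w, rfl, rfl, hw⟩
    · obtain ⟨m', hm', d', hd', hpath⟩ := exists_shorter hκ hh hhQ hph hw hd (by omega)
      exact ih m' hm' hpath hd'

end Reachable

/-- Let `R = post*(p(0))` be infinite and strongly connected
(`R ⊆ pre*(p(0))`).  Then every configuration in `pre*(R)` can reach a configuration
of `R` by a path of length at most `4·|Q|³`. -/
theorem stmt8 {Q : Type*} [Fintype Q] (δ : Q → ℤ → Q → Prop) (p : Q)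
    (hκ : ∀ a k b, δ a k b → k = -1 ∨ k = 0 ∨ k = 1)
    (hinf : {c : Q × ℕ | OCReach δ (p, 0) c}.Infinite)
    (hback : ∀ c : Q × ℕ, OCReach δ (p, 0) c → OCReach δ c (p, 0)) :
    ∀ c : Q × ℕ, (∃ d : Q × ℕ, OCReach δ (p, 0) d ∧ OCReach δ c d) →
      ∃ d : Q × ℕ, OCReach δ (p, 0) d ∧ OCReachIn δ (4 * Fintype.card Q ^ 3) c d := by
  rintro c ⟨d, hd, hcd⟩
  obtain ⟨h, hh, hhQ, hph⟩ := exists_period hκ hinf hback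
  obtain ⟨m, hm⟩ := hcd.exists_ocPath
  obtain ⟨d', hd', n, hn, hpath⟩ := exists_reachIn_of_ocPath hκ hh hhQ hph hm hd
  exact ⟨d', hd', n, by omega, hpath⟩
end
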